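/- Let (H_n)_{n ∈ ℕ} ⊆ ℝ^d with |H_n| → ∞, and suppose there exist random variables ΔS (ℝ^d-valued) and bounded quantities a_n, b_n with a_n + H_n·ΔS ≥ b_n P-a.s. for all n and all P ∈ 𝒫, where sup_n |a_n| < ∞ and sup_n |b_n| < ∞ on the relevant support. If additionally each H_n lies in the linear span L of the 𝒫-quasi-sure support of ΔS, and the no-arbitrage condition holds (H·ΔS ≥ 0 𝒫-q.s. ⟹ H·ΔS = 0 𝒫-q.s.), then a contradiction follows; equivalently, the set of H ∈ L satisfying a uniform superhedging inequality with bounded right-hand side is bounded. -/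

import Mathlib

/-!
Normalize `H_n` to the unit vectors `H_n / |H_n|` and extract a convergent subsequence with
limit `x`, `|x| = 1`; since `L` is closed, `x ∈ L`. Dividing `a_n + H_n·ΔS ≥ b_n` by `|H_n|`
and letting `n → ∞` gives `x·ΔS ≥ 0` quasi-surely, so `x·ΔS = 0` quasi-surely by no-arbitrage,
whence `x ∈ L ∩ Lᗮ = {0}`, contradicting `|x| = 1`.
-/

open MeasureTheory Set Filter Topology
open scoped RealInnerProductSpace

/-- A property `p` holds `𝒫`-quasi-surely if its failure set is `P`-null
(as outer measure) for every `P ∈ 𝒫`. -/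
def QuasiSurely {Ω : Type*} [MeasurableSpace Ω] (Pc : Set (Measure Ω))
    (p : Ω → Prop) : Prop :=
  ∀ P ∈ Pc, P {ω | ¬ p ω} = 0

namespace QuasiSurely

variable {Ω : Type*} [MeasurableSpace Ω] {Pc : Set (Measure Ω)}

theorem mono {p q : Ω → Prop} (hp : QuasiSurely Pc p) (hpq : ∀ ω, p ω → q ω) :
    QuasiSurely Pc q :=
  fun P hP => measure_mono_null (fun ω hqω hpω => hqω (hpq ω hpω)) (hp P hP)

theorem forall_of_countable {ι : Type*} [Countable ι] {p : ι → Ω → Prop}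
    (hp : ∀ i, QuasiSurely Pc (p i)) : QuasiSurely Pc (fun ω => ∀ i, p i ω) := by
  intro P hP
  have hsub : {ω | ¬ ∀ i, p i ω} ⊆ ⋃ i, {ω | ¬ p i ω} := fun ω hω => by simpa using hω
  exact measure_mono_null hsub (measure_iUnion_null fun i => hp i P hP)

end QuasiSurely

theorem nonneg_of_tendsto_inv_mul_of_forall_le {r f : ℕ → ℝ} {C t : ℝ}
    (hr : Tendsto r atTop atTop) (hf : ∀ n, -C ≤ f n)
    (ht : Tendsto (fun n => (r n)⁻¹ * f n) atTop (𝓝 t)) : 0 ≤ t := by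
  have hlower : Tendsto (fun n => (r n)⁻¹ * -C) atTop (𝓝 0) := by
    simpa using hr.inv_tendsto_atTop.mul_const (-C)
  refine le_of_tendsto_of_tendsto hlower ht ?_
  filter_upwards [hr.eventually_ge_atTop 0] with n hn
  exact mul_le_mul_of_nonneg_left (hf n) (inv_nonneg.mpr hn)

theorem exists_norm_eq_one_tendsto_inv_norm_smul_subseq {E : Type*} [NormedAddCommGroup E]
    [NormedSpace ℝ E] [ProperSpace E] {v : ℕ → E}
    (hv : Tendsto (fun n => ‖v n‖) atTop atTop) :
    ∃ x, ‖x‖ = 1 ∧ ∃ φ : ℕ → ℕ, StrictMono φ ∧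
      Tendsto (fun k => ‖v (φ k)‖⁻¹ • v (φ k)) atTop (𝓝 x) := by
  have hball : ∀ n, ‖v n‖⁻¹ • v n ∈ Metric.closedBall (0 : E) 1 := fun n => by
    simpa [norm_smul] using inv_mul_le_one (a := ‖v n‖)
  obtain ⟨x, -, φ, hφ, hconv⟩ := (isCompact_closedBall (0 : E) 1).tendsto_subseq hball
  refine ⟨x, tendsto_nhds_unique hconv.norm (tendsto_const_nhds.congr' ?_), φ, hφ, hconv⟩
  filter_upwards [(hv.comp hφ.tendsto_atTop).eventually_gt_atTop 0] with k hk
  simpa [norm_smul] using (inv_mul_cancel₀ hk.ne').symm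

theorem inner_nonneg_of_tendsto_inv_norm_smul {E : Type*} [NormedAddCommGroup E]
    [InnerProductSpace ℝ E] {v : ℕ → E} {x y : E} {C : ℝ}
    (hv : Tendsto (fun n => ‖v n‖) atTop atTop) (hbdd : ∀ n, -C ≤ ⟪v n, y⟫)
    (hx : Tendsto (fun n => ‖v n‖⁻¹ • v n) atTop (𝓝 x)) : 0 ≤ ⟪x, y⟫ :=
  nonneg_of_tendsto_inv_mul_of_forall_le hv hbdd <| by
    simpa only [real_inner_smul_left] using hx.inner (𝕜 := ℝ) tendsto_const_nhds

/-- Suppose `(H_n) ⊆ L` with `|H_n| → ∞`, satisfying the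
uniform superhedging inequalities `a_n + H_n·ΔS ≥ b_n` `𝒫`-q.s. with `a_n`,
`b_n` uniformly bounded, where `L` is a subspace such that `H·ΔS = 0` q.s.
implies `H ∈ L^⊥`, and the no-arbitrage condition holds. Then a contradiction
follows. -/
theorem stmt12 {Ω : Type*} [MeasurableSpace Ω] {d : ℕ}
    (Pc : Set (Measure Ω)) (ΔS : Ω → EuclideanSpace ℝ (Fin d))
    (L : Submodule ℝ (EuclideanSpace ℝ (Fin d)))
    (hL : ∀ H : EuclideanSpace ℝ (Fin d),
      QuasiSurely Pc (fun ω => ⟪H, ΔS ω⟫ = 0) → H ∈ Lᗮ)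
    (hNA : ∀ H : EuclideanSpace ℝ (Fin d),
      QuasiSurely Pc (fun ω => 0 ≤ ⟪H, ΔS ω⟫) →
      QuasiSurely Pc (fun ω => ⟪H, ΔS ω⟫ = 0))
    (H : ℕ → EuclideanSpace ℝ (Fin d)) (hmem : ∀ n, H n ∈ L)
    (hnorm : Tendsto (fun n => ‖H n‖) atTop atTop)
    (a b : ℕ → ℝ) (hbdd : ∃ M : ℝ, ∀ n, |a n| ≤ M ∧ |b n| ≤ M)
    (hineq : ∀ n, QuasiSurely Pc (fun ω => b n ≤ a n + ⟪H n, ΔS ω⟫)) :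
    False := by
  obtain ⟨M, hM⟩ := hbdd
  obtain ⟨x, hx1, φ, hφ, hconv⟩ := exists_norm_eq_one_tendsto_inv_norm_smul_subseq hnorm
  have hxL : x ∈ L := L.closed_of_finiteDimensional.mem_of_tendsto hconv
    (Eventually.of_forall fun k => L.smul_mem _ (hmem (φ k)))
  have hpos : QuasiSurely Pc (fun ω => 0 ≤ ⟪x, ΔS ω⟫) :=
    (QuasiSurely.forall_of_countable hineq).mono fun ω hω =>
      inner_nonneg_of_tendsto_inv_norm_smul (C := 2 * M) (hnorm.comp hφ.tendsto_atTop)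
        (fun k => by
          have ha := abs_le.mp (hM (φ k)).1
          have hb := abs_le.mp (hM (φ k)).2
          linarith [hω (φ k)])
        hconv
  have hx0 : x = 0 := inner_self_eq_zero.mp (hL x (hNA x hpos) x hxL)
  simp [hx0] at hx1
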